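/- Let f₁ be a hyperbolic analytic circle diffeomorphism with rot f₁ = 0, and let f₂ ≠ id be an analytic circle diffeomorphism. Then there exists an analytic circle diffeomorphism h such that (h∘f₁∘h⁻¹) ∘ f₂⁻¹ has a periodic point of period 2, and rot((h∘f₁∘h⁻¹) ∘ f₂⁻¹) = 1/2. -/

import Mathlib

open Filter Topology

/-- An analytic circle diffeomorphism, given by an analytic, strictly increasing lift
`F : ℝ → ℝ` with `F (x+1) = F x + 1`, together with an analytic inverse. -/
structure AnalyticCircleDiffeo where
  toFun : ℝ → ℝ
  invFun : ℝ → ℝ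
  analyticAt_toFun : ∀ x, AnalyticAt ℝ toFun x
  analyticAt_invFun : ∀ x, AnalyticAt ℝ invFun x
  strictMono_toFun : StrictMono toFun
  leftInverse : Function.LeftInverse invFun toFun
  rightInverse : Function.RightInverse invFun toFun
  map_add_one : ∀ x, toFun (x + 1) = toFun x + 1

namespace AnalyticCircleDiffeo

/-- The rotation number of (the chosen lift of) a circle diffeomorphism. -/
noncomputable def rot (f : AnalyticCircleDiffeo) : ℝ :=
  limUnder atTop fun n : ℕ => f.toFun^[n] 0 / n

/-- The composition of two analytic circle diffeomorphisms. -/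
def comp (f g : AnalyticCircleDiffeo) : AnalyticCircleDiffeo where
  toFun := f.toFun ∘ g.toFun
  invFun := g.invFun ∘ f.invFun
  analyticAt_toFun := fun x => (f.analyticAt_toFun _).comp (g.analyticAt_toFun x)
  analyticAt_invFun := fun x => (g.analyticAt_invFun _).comp (f.analyticAt_invFun x)
  strictMono_toFun := f.strictMono_toFun.comp g.strictMono_toFun
  leftInverse := fun x => by
    show g.invFun (f.invFun (f.toFun (g.toFun x))) = x
    rw [f.leftInverse (g.toFun x), g.leftInverse x]
  rightInverse := fun x => by
    show f.toFun (g.toFun (g.invFun (f.invFun x))) = x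
    rw [g.rightInverse (f.invFun x), f.rightInverse x]
  map_add_one := fun x => by
    show f.toFun (g.toFun (x + 1)) = f.toFun (g.toFun x) + 1
    rw [g.map_add_one, f.map_add_one]

/-- The inverse of an analytic circle diffeomorphism. -/
def symm (f : AnalyticCircleDiffeo) : AnalyticCircleDiffeo where
  toFun := f.invFun
  invFun := f.toFun
  analyticAt_toFun := f.analyticAt_invFun
  analyticAt_invFun := f.analyticAt_toFun
  strictMono_toFun := fun x y hxy => by
    have h := f.strictMono_toFun.lt_iff_lt (a := f.invFun x) (b := f.invFun y)
    rw [f.rightInverse x, f.rightInverse y] at h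
    exact h.mp hxy
  leftInverse := f.rightInverse
  rightInverse := f.leftInverse
  map_add_one := fun x => by
    apply f.strictMono_toFun.injective
    rw [f.rightInverse, f.map_add_one, f.rightInverse]

/-- The circle diffeomorphism `f + ω : x ↦ f x + ω`. -/
noncomputable def addConst (f : AnalyticCircleDiffeo) (ω : ℝ) : AnalyticCircleDiffeo where
  toFun := fun x => f.toFun x + ω
  invFun := fun x => f.invFun (x - ω)
  analyticAt_toFun := fun x => (f.analyticAt_toFun x).add analyticAt_const
  analyticAt_invFun := fun x => by
    have h1 : AnalyticAt ℝ (fun y : ℝ => y - ω) x := analyticAt_id.sub analyticAt_const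
    have h2 : AnalyticAt ℝ (f.invFun ∘ fun y : ℝ => y - ω) x :=
      AnalyticAt.comp (g := f.invFun) (f := fun y : ℝ => y - ω)
        (f.analyticAt_invFun (x - ω)) h1
    exact h2
  strictMono_toFun := fun x y hxy => by
    show f.toFun x + ω < f.toFun y + ω
    linarith [f.strictMono_toFun hxy]
  leftInverse := fun x => by
    show f.invFun (f.toFun x + ω - ω) = x
    rw [add_sub_cancel_right, f.leftInverse x]
  rightInverse := fun x => by
    show f.toFun (f.invFun (x - ω)) + ω = x
    rw [f.rightInverse (x - ω)]; ring
  map_add_one := fun x => by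
    show f.toFun (x + 1) + ω = f.toFun x + ω + 1
    rw [f.map_add_one]; ring

/-- Two circle diffeomorphisms are analytically conjugate: `f₂ = h ∘ f₁ ∘ h⁻¹` as maps
of `ℝ/ℤ`; in terms of lifts, `h ∘ f₁ = f₂ ∘ h + k` for some integer `k`. -/
def Conjugate (f₁ f₂ : AnalyticCircleDiffeo) : Prop :=
  ∃ h : AnalyticCircleDiffeo, ∃ k : ℤ,
    ∀ x, h.toFun (f₁.toFun x) = f₂.toFun (h.toFun x) + k

/-- `f` is the identity of `ℝ/ℤ`, i.e. its lift is an integer translation. -/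
def IsId (f : AnalyticCircleDiffeo) : Prop :=
  ∃ k : ℤ, ∀ x, f.toFun x = x + k

/-- A circle diffeomorphism (with rotation number `0 mod 1`) is hyperbolic if it has a
fixed point on `ℝ/ℤ` and the multiplier at every fixed point is `≠ 1`. -/
def Hyperbolic (f : AnalyticCircleDiffeo) : Prop :=
  (∃ x : ℝ, ∃ k : ℤ, f.toFun x = x + k) ∧
    ∀ x : ℝ, (∃ k : ℤ, f.toFun x = x + k) → deriv f.toFun x ≠ 1

end AnalyticCircleDiffeo

/-- A real number is Diophantine. -/
def Diophantine (ρ : ℝ) : Prop :=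
  ∃ C > (0:ℝ), ∃ β > (0:ℝ), ∀ p : ℤ, ∀ q : ℕ, 0 < q →
    |ρ - p / q| ≥ C / (q : ℝ) ^ ((2:ℝ) + β)

/-!
A hyperbolic fixed point `f₁ p = p + k` yields points that `f₁` moves, modulo `1`, a little to the
right and a little to the left, and `f₂ ≠ id` moves some point `y` by a non-integer amount `c`.
An iterate of a squashing map stretches a short arc over almost the whole circle; conjugating
`f₁` by suitable such maps `h₀`, `h₁` makes `h ∘ f₁ ∘ h⁻¹ ∘ f₂⁻¹` move `f₂ y` by at most `M`
for `h = h₀` and by at least `M + 1` for `h = h₁`, where `M = k - ⌊c⌋ - 1`. Along the segment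
`h_t = (1 - t) h₀ + t h₁` the rotation number of `g_t = h_t ∘ f₁ ∘ h_t⁻¹ ∘ f₂⁻¹` is the uniform
limit of the continuous functions `t ↦ g_tⁿ(0) / n`, hence continuous, so it takes the value
`M + 1/2`; a continuous lift with rotation number `M + 1/2` has a point of period `2`.
-/
theorem HasDerivAt.exists_lt_and_exists_gt {D : ℝ → ℝ} {D' p : ℝ} (hD : HasDerivAt D D' p)
    (hD' : D' ≠ 0) : (∃ a, D p < D a) ∧ ∃ b, D b < D p := by
  constructor <;> by_contra! h
  · exact hD' (IsLocalMax.hasDerivAt_eq_zero (Eventually.of_forall h) hD)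
  · exact hD' (IsLocalMin.hasDerivAt_eq_zero (Eventually.of_forall h) hD)

theorem continuous_of_rightInverse_of_strictMono {X : Type*} [TopologicalSpace X]
    {H G : X → ℝ → ℝ} (hH : Continuous fun p : X × ℝ => H p.1 p.2)
    (hmono : ∀ t, StrictMono (H t)) (hG : ∀ t, Function.RightInverse (G t) (H t)) :
    Continuous fun p : X × ℝ => G p.1 p.2 := by
  have hH_at (a : ℝ) : Continuous fun p : X × ℝ => H p.1 a :=
    hH.comp (continuous_fst.prodMk continuous_const)
  refine continuous_iff_continuousAt.2 fun p => tendsto_order.2 ⟨fun a ha => ?_, fun b hb => ?_⟩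
  · have hlt : H p.1 a < p.2 := by simpa only [hG p.1 p.2] using hmono p.1 ha
    filter_upwards [(hH_at a).continuousAt.eventually_lt continuous_snd.continuousAt hlt]
      with q hq
    exact (hmono q.1).lt_iff_lt.1 (by rwa [hG q.1 q.2])
  · have hlt : p.2 < H p.1 b := by simpa only [hG p.1 p.2] using hmono p.1 hb
    filter_upwards [continuous_snd.continuousAt.eventually_lt (hH_at b).continuousAt hlt]
      with q hq
    exact (hmono q.1).lt_iff_lt.1 (by rwa [hG q.1 q.2])

namespace CircleDeg1Lift

theorem continuous_translationNumber_of_continuous {X : Type*} [TopologicalSpace X]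
    {L : X → CircleDeg1Lift} (hL : Continuous fun p : X × ℝ => L p.1 p.2) :
    Continuous fun t => (L t).translationNumber := by
  have hpow : ∀ n : ℕ, Continuous fun t => (L t ^ n) 0 := by
    intro n
    induction n with
    | zero => simpa using continuous_const
    | succ n ih =>
      simp_rw [pow_succ', mul_apply]
      exact hL.comp (continuous_id.prodMk ih)
  refine TendstoUniformly.continuous (F := fun (n : ℕ) t => (L t ^ n) 0 / n) (p := atTop) ?_
    (Eventually.of_forall fun n => (hpow n).div_const _).frequently
  rw [Metric.tendstoUniformly_iff]
  intro ε hε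
  obtain ⟨N, hN⟩ := exists_nat_gt ε⁻¹
  filter_upwards [eventually_gt_atTop N] with n hn t
  have hn0 : (0 : ℝ) < n := by exact_mod_cast (Nat.zero_le N).trans_lt hn
  have hbound := (L t).dist_pow_map_zero_mul_translationNumber_le n
  rw [Real.dist_eq] at hbound ⊢
  calc |(L t).translationNumber - (L t ^ n) 0 / n|
      = |(L t ^ n) 0 - n * (L t).translationNumber| / n := by
        rw [← abs_of_pos hn0, ← abs_div, abs_of_pos hn0, abs_sub_comm]
        congr 1
        field_simp
    _ ≤ 1 / n := by gcongr
    _ < ε := (one_div_lt hn0 hε).2 (by rw [one_div]; exact hN.trans (by exact_mod_cast hn))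

theorem exists_period_two_of_translationNumber_eq {f : CircleDeg1Lift} (hf : Continuous f) {m : ℤ}
    (h : f.translationNumber = m + 1 / 2) :
    ∃ x, (¬ ∃ k : ℤ, f x = x + k) ∧ f (f x) = x + (2 * m + 1 : ℤ) := by
  obtain ⟨x, hx⟩ := (f.translationNumber_eq_rat_iff hf (m := 2 * m + 1) two_pos).1 <| by
    rw [h]; push_cast; ring
  rw [pow_two, mul_apply] at hx
  refine ⟨x, ?_, hx⟩
  rintro ⟨k, hk⟩
  rw [hk, f.map_add_int, hk] at hx
  have : ((k + k : ℤ) : ℝ) = (2 * m + 1 : ℤ) := by push_cast at hx ⊢; linarith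
  have := Int.cast_inj.1 this
  omega

end CircleDeg1Lift

section Squash

open Real

/-- Fixes `0` (repelling) and `1/2` (attracting), so its iterates stretch any arc centred at `0`
over almost the whole circle. -/
noncomputable def squash (x : ℝ) : ℝ := x + sin (2 * π * x) / (4 * π)

theorem hasDerivAt_squash (x : ℝ) : HasDerivAt squash (1 + cos (2 * π * x) / 2) x := by
  have h := ((hasDerivAt_id' x).const_mul (2 * π)).sin.div_const (4 * π)
  refine ((hasDerivAt_id' x).add h).congr_deriv ?_
  field_simp
  ring

theorem deriv_squash_pos (x : ℝ) : 0 < deriv squash x := by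
  rw [(hasDerivAt_squash x).deriv]
  linarith [neg_one_le_cos (2 * π * x)]

theorem analyticAt_squash (x : ℝ) : AnalyticAt ℝ squash x := by
  unfold squash
  fun_prop

theorem squash_add_one (x : ℝ) : squash (x + 1) = squash x + 1 := by
  simp only [squash, mul_add, mul_one, sin_add_two_pi]
  ring

theorem squash_neg (x : ℝ) : squash (-x) = -squash x := by
  simp only [squash, mul_neg, sin_neg]
  ring

theorem squash_half : squash (1 / 2) = 1 / 2 := by
  rw [squash, show 2 * π * (1 / 2) = π by ring, sin_pi]
  ring

theorem lt_squash {x : ℝ} (h₀ : 0 < x) (h₁ : x < 1 / 2) : x < squash x := by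
  have : 0 < sin (2 * π * x) := sin_pos_of_pos_of_lt_pi (by positivity) (by nlinarith [pi_pos])
  have : 0 < sin (2 * π * x) / (4 * π) := by positivity
  unfold squash
  linarith

theorem tendsto_iterate_squash {u : ℝ} (hu : u ∈ Set.Ioo 0 (1 / 2)) :
    Tendsto (fun n => squash^[n] u) atTop (𝓝 (1 / 2)) := by
  have hmono : StrictMono squash := strictMono_of_deriv_pos deriv_squash_pos
  have hmaps : Set.MapsTo squash (Set.Ioo 0 (1 / 2)) (Set.Ioo 0 (1 / 2)) := fun x hx =>
    ⟨hx.1.trans (lt_squash hx.1 hx.2), squash_half ▸ hmono hx.2⟩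
  have hmem (n : ℕ) : squash^[n] u ∈ Set.Ioo 0 (1 / 2) := (hmaps.iterate n) hu
  have hbdd : BddAbove (Set.range fun n => squash^[n] u) :=
    ⟨1 / 2, Set.forall_mem_range.2 fun n => (hmem n).2.le⟩
  have hlim := tendsto_atTop_ciSup (monotone_nat_of_le_succ fun n => by
    rw [Function.iterate_succ_apply']
    exact (lt_squash (hmem n).1 (hmem n).2).le) hbdd
  set L := ⨆ n, squash^[n] u
  have hfix : squash L = L :=
    isFixedPt_of_tendsto_iterate hlim (analyticAt_squash L).continuousAt
  have hpos : 0 < L := (hmem 0).1.trans_le (le_ciSup hbdd 0)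
  have hle : L ≤ 1 / 2 := ciSup_le fun n => (hmem n).2.le
  obtain hlt | heq := hle.lt_or_eq
  · exact absurd hfix (lt_squash hpos hlt).ne'
  · rwa [← heq]

end Squash

namespace AnalyticCircleDiffeo

@[ext]
theorem ext {f g : AnalyticCircleDiffeo} (h : f.toFun = g.toFun) : f = g := by
  have hinv : f.invFun = g.invFun := funext fun y =>
    g.strictMono_toFun.injective <| by rw [g.rightInverse y, ← h, f.rightInverse y]
  cases f
  cases g
  subst h hinv
  rfl

def toCircleDeg1Lift (f : AnalyticCircleDiffeo) : CircleDeg1Lift :=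
  ⟨⟨f.toFun, f.strictMono_toFun.monotone⟩, f.map_add_one⟩

@[simp]
theorem toCircleDeg1Lift_apply (f : AnalyticCircleDiffeo) (x : ℝ) :
    f.toCircleDeg1Lift x = f.toFun x :=
  rfl

theorem toFun_add_int (f : AnalyticCircleDiffeo) (x : ℝ) (k : ℤ) :
    f.toFun (x + k) = f.toFun x + k :=
  f.toCircleDeg1Lift.map_add_int x k

theorem continuous_toFun (f : AnalyticCircleDiffeo) : Continuous f.toFun :=
  continuous_iff_continuousAt.2 fun x => (f.analyticAt_toFun x).continuousAt

theorem rot_eq_translationNumber (f : AnalyticCircleDiffeo) :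
    rot f = f.toCircleDeg1Lift.translationNumber :=
  (f.toCircleDeg1Lift.tendsto_translation_number₀.congr fun n => by
    rw [CircleDeg1Lift.coe_pow]; rfl).limUnder_eq

theorem deriv_toFun_pos (f : AnalyticCircleDiffeo) (x : ℝ) : 0 < deriv f.toFun x := by
  have hcomp : HasDerivAt (f.invFun ∘ f.toFun)
      (deriv f.invFun (f.toFun x) * deriv f.toFun x) x :=
    (f.analyticAt_invFun _).differentiableAt.hasDerivAt.comp x
      (f.analyticAt_toFun x).differentiableAt.hasDerivAt
  have hid : f.invFun ∘ f.toFun = id := funext f.leftInverse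
  rw [hid] at hcomp
  have hne : deriv f.toFun x ≠ 0 := by
    intro h0
    simpa [h0] using (hasDerivAt_id x).unique hcomp
  exact lt_of_le_of_ne f.strictMono_toFun.monotone.deriv_nonneg hne.symm

noncomputable def ofDerivPos (F : ℝ → ℝ) (hF : ∀ x, AnalyticAt ℝ F x) (hF' : ∀ x, 0 < deriv F x)
    (hF1 : ∀ x, F (x + 1) = F x + 1) : AnalyticCircleDiffeo :=
  have hmono : StrictMono F := strictMono_of_deriv_pos hF'
  have hsurj : Function.Surjective F :=
    (CircleDeg1Lift.mk ⟨F, hmono.monotone⟩ hF1).continuous_iff_surjective.1 <|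
      continuous_iff_continuousAt.2 fun x => (hF x).continuousAt
  let e := hmono.orderIsoOfSurjective F hsurj
  { toFun := F
    invFun := e.symm
    analyticAt_toFun := hF
    analyticAt_invFun := fun y => by
      have hid : AnalyticAt ℝ (e.symm ∘ F) (e.symm y) := by
        rw [show e.symm ∘ F = id from funext e.symm_apply_apply]
        exact analyticAt_id
      have := (analyticAt_comp_iff_of_deriv_ne_zero (hF _) (hF' _).ne').1 hid
      rwa [show F (e.symm y) = y from e.apply_symm_apply y] at this
    strictMono_toFun := hmono
    leftInverse := e.symm_apply_apply
    rightInverse := e.apply_symm_apply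
    map_add_one := hF1 }

def refl : AnalyticCircleDiffeo where
  toFun := id
  invFun := id
  analyticAt_toFun _ := analyticAt_id
  analyticAt_invFun _ := analyticAt_id
  strictMono_toFun := strictMono_id
  leftInverse _ := rfl
  rightInverse _ := rfl
  map_add_one _ := rfl

theorem toFun_comp_iterate (f g : AnalyticCircleDiffeo) (n : ℕ) :
    ((f.comp)^[n] g).toFun = f.toFun^[n] ∘ g.toFun := by
  induction n with
  | zero => rfl
  | succ n ih =>
    rw [Function.iterate_succ_apply', Function.iterate_succ']
    change f.toFun ∘ ((f.comp)^[n] g).toFun = _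
    rw [ih, Function.comp_assoc]

noncomputable def lineMap (f g : AnalyticCircleDiffeo) (t : unitInterval) : AnalyticCircleDiffeo :=
  ofDerivPos (fun x => (1 - t) * f.toFun x + t * g.toFun x)
    (fun x => (analyticAt_const.mul (f.analyticAt_toFun x)).add
      (analyticAt_const.mul (g.analyticAt_toFun x)))
    (fun x => by
      rw [(((f.analyticAt_toFun x).differentiableAt.hasDerivAt.const_mul _).fun_add
        ((g.analyticAt_toFun x).differentiableAt.hasDerivAt.const_mul _)).deriv]
      exact convex_Ioi (0 : ℝ) (f.deriv_toFun_pos x) (g.deriv_toFun_pos x) (sub_nonneg.2 t.2.2)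
        t.2.1 (sub_add_cancel 1 _))
    (fun x => by simp only [f.map_add_one, g.map_add_one]; ring)

@[simp]
theorem lineMap_toFun (f g : AnalyticCircleDiffeo) (t : unitInterval) :
    (lineMap f g t).toFun = fun x => (1 - t) * f.toFun x + t * g.toFun x :=
  rfl

theorem lineMap_zero (f g : AnalyticCircleDiffeo) : lineMap f g 0 = f := by
  ext x
  simp

theorem lineMap_one (f g : AnalyticCircleDiffeo) : lineMap f g 1 = g := by
  ext x
  simp

def conjMulInv (h f g : AnalyticCircleDiffeo) : AnalyticCircleDiffeo :=
  ((h.comp f).comp h.symm).comp g.symm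

theorem conjMulInv_toFun_apply (h f g : AnalyticCircleDiffeo) (y : ℝ) :
    (conjMulInv h f g).toFun (g.toFun y) = h.toFun (f.toFun (h.invFun y)) :=
  congrArg (fun z => h.toFun (f.toFun (h.invFun z))) (g.leftInverse y)

theorem exists_rot_conjMulInv_eq (f₁ f₂ h₀ h₁ : AnalyticCircleDiffeo) {r : ℝ}
    (hr : r ∈ Set.Icc (rot (conjMulInv h₀ f₁ f₂)) (rot (conjMulInv h₁ f₁ f₂))) :
    ∃ h, rot (conjMulInv h f₁ f₂) = r := by
  set H := lineMap h₀ h₁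
  have hH : Continuous fun p : unitInterval × ℝ => (H p.1).toFun p.2 := by
    simp only [H, lineMap_toFun]
    have := h₀.continuous_toFun
    have := h₁.continuous_toFun
    fun_prop
  have hHinv : Continuous fun p : unitInterval × ℝ => (H p.1).invFun p.2 :=
    continuous_of_rightInverse_of_strictMono hH (fun t => (H t).strictMono_toFun)
      fun t => (H t).rightInverse
  have hL : Continuous fun p : unitInterval × ℝ =>
      (conjMulInv (H p.1) f₁ f₂).toCircleDeg1Lift p.2 :=
    hH.comp <| continuous_fst.prodMk <| f₁.continuous_toFun.comp <| hHinv.comp <|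
      continuous_fst.prodMk <| f₂.symm.continuous_toFun.comp continuous_snd
  have hrot : Continuous fun t => rot (conjMulInv (H t) f₁ f₂) := by
    simpa only [rot_eq_translationNumber] using
      CircleDeg1Lift.continuous_translationNumber_of_continuous hL
  obtain ⟨t, ht⟩ := intermediate_value_univ 0 1 hrot <| by
    simpa only [H, lineMap_zero, lineMap_one] using hr
  exact ⟨H t, ht⟩

theorem exists_lt_toFun_sub_toFun {a b κ : ℝ} (hab : a < b) (hba : b < a + 1) (hκ : κ < 1) :
    ∃ h : AnalyticCircleDiffeo, κ < h.toFun b - h.toFun a := by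
  obtain ⟨N, hN⟩ := ((tendsto_iterate_squash (u := (b - a) / 2)
    ⟨by linarith, by linarith⟩).eventually (lt_mem_nhds (show κ / 2 < 1 / 2 by linarith))).exists
  let s := ofDerivPos squash analyticAt_squash deriv_squash_pos squash_add_one
  refine ⟨(s.comp)^[N] (refl.addConst (-((a + b) / 2))), ?_⟩
  have hodd := (Function.Commute.iterate_left (g := Neg.neg) squash_neg N) ((b - a) / 2)
  rw [toFun_comp_iterate]
  change κ < squash^[N] (b + -((a + b) / 2)) - squash^[N] (a + -((a + b) / 2))
  rw [show b + -((a + b) / 2) = (b - a) / 2 by ring,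
    show a + -((a + b) / 2) = -((b - a) / 2) by ring, hodd]
  linarith

theorem conjMulInv_addConst_toFun_apply (h f g : AnalyticCircleDiffeo) (b y : ℝ) :
    (conjMulInv (h.addConst (y - h.toFun b)) f g).toFun (g.toFun y) =
      y + (h.toFun (f.toFun b) - h.toFun b) := by
  rw [conjMulInv_toFun_apply]
  change h.toFun (f.toFun (h.invFun (y - (y - h.toFun b)))) + (y - h.toFun b) = _
  rw [sub_sub_cancel, h.leftInverse]
  ring

theorem exists_rot_conjMulInv_le {f₁ : AnalyticCircleDiffeo} {k : ℤ} {b : ℝ}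
    (hb₁ : b + k - 1 < f₁.toFun b) (hb₂ : f₁.toFun b < b + k) (f₂ : AnalyticCircleDiffeo) {y : ℝ}
    {m : ℤ} (hm : (k - m - 1 : ℝ) < f₂.toFun y - y) :
    ∃ h, rot (conjMulInv h f₁ f₂) ≤ m := by
  obtain ⟨h, hh⟩ := exists_lt_toFun_sub_toFun (a := f₁.toFun b - k) (b := b)
    (κ := k - m - (f₂.toFun y - y)) (by linarith) (by linarith) (by linarith)
  refine ⟨h.addConst (y - h.toFun b), ?_⟩
  rw [rot_eq_translationNumber]
  refine CircleDeg1Lift.translationNumber_le_of_le_add_int _ (x := f₂.toFun y) ?_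
  rw [toCircleDeg1Lift_apply, conjMulInv_addConst_toFun_apply]
  have := h.toFun_add_int (f₁.toFun b - k) k
  rw [sub_add_cancel] at this
  linarith

theorem exists_le_rot_conjMulInv {f₁ : AnalyticCircleDiffeo} {k : ℤ} {a : ℝ}
    (ha₁ : a + k < f₁.toFun a) (ha₂ : f₁.toFun a < a + k + 1) (f₂ : AnalyticCircleDiffeo) {y : ℝ}
    {m : ℤ} (hm : f₂.toFun y - y < k - m + 1) :
    ∃ h, m ≤ rot (conjMulInv h f₁ f₂) := by
  obtain ⟨h, hh⟩ := exists_lt_toFun_sub_toFun (a := a) (b := f₁.toFun a - k)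
    (κ := f₂.toFun y - y + m - k) (by linarith) (by linarith) (by linarith)
  refine ⟨h.addConst (y - h.toFun a), ?_⟩
  rw [rot_eq_translationNumber]
  refine CircleDeg1Lift.le_translationNumber_of_add_int_le _ (x := f₂.toFun y) ?_
  rw [toCircleDeg1Lift_apply, conjMulInv_addConst_toFun_apply]
  have := h.toFun_add_int (f₁.toFun a - k) k
  rw [sub_add_cancel] at this
  linarith

theorem Hyperbolic.exists_displacement {f : AnalyticCircleDiffeo} (hf : Hyperbolic f) :
    ∃ k : ℤ, (∃ a, a + k < f.toFun a ∧ f.toFun a < a + k + 1) ∧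
      ∃ b, b + k - 1 < f.toFun b ∧ f.toFun b < b + k := by
  obtain ⟨⟨p, k, hp⟩, hderiv⟩ := hf
  have hτ : f.toCircleDeg1Lift.translationNumber = k :=
    f.toCircleDeg1Lift.translationNumber_of_eq_add_int hp
  have hD : HasDerivAt (fun x => f.toFun x - x) (deriv f.toFun p - 1) p :=
    (f.analyticAt_toFun p).differentiableAt.hasDerivAt.sub (hasDerivAt_id' p)
  obtain ⟨⟨a, ha⟩, ⟨b, hb⟩⟩ := hD.exists_lt_and_exists_gt (sub_ne_zero.2 (hderiv p ⟨k, hp⟩))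
  have hup (x : ℝ) : f.toFun x < x + k + 1 :=
    hτ ▸ f.toCircleDeg1Lift.map_lt_add_translationNumber_add_one x
  have hlow (x : ℝ) : x + k - 1 < f.toFun x := by
    have := f.toCircleDeg1Lift.lt_map_of_int_lt_translationNumber (n := k - 1)
      (by rw [hτ]; push_cast; linarith) x
    rw [toCircleDeg1Lift_apply, Int.cast_sub, Int.cast_one] at this
    linarith
  simp only [hp] at ha hb
  exact ⟨k, ⟨a, by linarith, hup a⟩, ⟨b, hlow b, by linarith⟩⟩

theorem exists_fract_pos_of_not_isId {f : AnalyticCircleDiffeo} (hf : ¬ IsId f) :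
    ∃ y, 0 < Int.fract (f.toFun y - y) := by
  by_contra! h
  have hint (y : ℝ) : f.toFun y - y = ⌊f.toFun y - y⌋ := by
    linarith [Int.floor_add_fract (f.toFun y - y), h y, Int.fract_nonneg (f.toFun y - y)]
  refine hf ⟨⌊f.toFun 0 - 0⌋, fun x => ?_⟩
  have := isPreconnected_univ.constant_of_mapsTo (f := fun y => f.toFun y - y)
    Int.isClosedEmbedding_coe_real.isInducing.isDiscrete_range
    (f.continuous_toFun.sub continuous_id).continuousOn (fun y _ => ⟨_, (hint y).symm⟩)
    (Set.mem_univ x) (Set.mem_univ 0)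
  linarith [hint 0]

end AnalyticCircleDiffeo

open AnalyticCircleDiffeo in
theorem statement5_general (f₁ f₂ : AnalyticCircleDiffeo)
    (h₁hyp : Hyperbolic f₁)
    (h₂ : ¬ IsId f₂) :
    ∃ h : AnalyticCircleDiffeo,
      (∃ x : ℝ,
        (¬ ∃ k : ℤ, (((h.comp f₁).comp h.symm).comp f₂.symm).toFun x = x + (k : ℝ)) ∧
        (∃ k : ℤ, (((h.comp f₁).comp h.symm).comp f₂.symm).toFun
            ((((h.comp f₁).comp h.symm).comp f₂.symm).toFun x) = x + (k : ℝ))) ∧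
      (∃ k : ℤ, rot (((h.comp f₁).comp h.symm).comp f₂.symm) = 1 / 2 + (k : ℝ)) := by
  obtain ⟨k, ⟨a, ha₁, ha₂⟩, ⟨b, hb₁, hb₂⟩⟩ := h₁hyp.exists_displacement
  obtain ⟨y, hy⟩ := exists_fract_pos_of_not_isId h₂
  have hfloor := Int.floor_add_fract (f₂.toFun y - y)
  have hfract := Int.fract_lt_one (f₂.toFun y - y)
  set M := k - ⌊f₂.toFun y - y⌋ - 1
  obtain ⟨h₀, hh₀⟩ := exists_rot_conjMulInv_le hb₁ hb₂ f₂ (m := M) (by push_cast [M]; linarith)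
  obtain ⟨h₁, hh₁⟩ := exists_le_rot_conjMulInv ha₁ ha₂ f₂ (m := M + 1) (by push_cast [M]; linarith)
  obtain ⟨h, hrot⟩ := exists_rot_conjMulInv_eq f₁ f₂ h₀ h₁ (r := M + 1 / 2)
    ⟨by linarith, by push_cast at hh₁; linarith⟩
  obtain ⟨x, hx, hx₂⟩ := CircleDeg1Lift.exists_period_two_of_translationNumber_eq
    (conjMulInv h f₁ f₂).continuous_toFun (by rwa [← rot_eq_translationNumber])
  exact ⟨h, ⟨x, hx, _, hx₂⟩, M, by rw [add_comm]; exact hrot⟩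

open AnalyticCircleDiffeo in
/-- For a hyperbolic analytic circle diffeomorphism `f₁` with
`rot f₁ = 0 (mod 1)` and an analytic circle diffeomorphism `f₂ ≠ id`, there is an
analytic circle diffeomorphism `h` such that `g := (h ∘ f₁ ∘ h⁻¹) ∘ f₂⁻¹` has a periodic
point of period `2` on `ℝ/ℤ` (a point `x` with `g (g x) = x` but `g x ≠ x` mod `1`), and
`rot g = 1/2 (mod 1)`. -/
theorem statement5 (f₁ f₂ : AnalyticCircleDiffeo)
    (h₁hyp : Hyperbolic f₁) (h₁rot : ∃ k : ℤ, rot f₁ = (k : ℝ))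
    (h₂ : ¬ IsId f₂) :
    ∃ h : AnalyticCircleDiffeo,
      (∃ x : ℝ,
        (¬ ∃ k : ℤ, (((h.comp f₁).comp h.symm).comp f₂.symm).toFun x = x + (k : ℝ)) ∧
        (∃ k : ℤ, (((h.comp f₁).comp h.symm).comp f₂.symm).toFun
            ((((h.comp f₁).comp h.symm).comp f₂.symm).toFun x) = x + (k : ℝ))) ∧
      (∃ k : ℤ, rot (((h.comp f₁).comp h.symm).comp f₂.symm) = 1 / 2 + (k : ℝ)) :=
  statement5_general f₁ f₂ h₁hyp h₂
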